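/- arXiv:2207.12022 — 3 statements merged into one kernel-verified Lean document; each statement's English description precedes it below -/
import Mathlib

section
/- The coalitional game G(N, J) with J(S) = Σ_{i∈S} λ_{b_i}B_i + λ_h(X_S−B_S)^+ − μ_h(B_S−X_S)^+ + λ_l(Y_S+B_S) is balanced: for every balanced map α: 2^N → [0,1] satisfying Σ_{S⊆N} α(S)·1_S(i) = 1 for all i ∈ N, we have Σ_{S⊆N} α(S)·J(S) ≥ J(N), provided λ_h ≥ μ_h ≥ 0 and λ_l ≥ 0. -/
/-- Coalition cost J(S) on a finite player type. -/
noncomputable def coalCost {ι : Type*} [Fintype ι] [DecidableEq ι]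
    (lh mh ll : ℝ) (lb X Y B : ι → ℝ) (S : Finset ι) : ℝ :=
  ∑ i ∈ S, lb i * B i
    + lh * max (∑ i ∈ S, X i - ∑ i ∈ S, B i) 0
    - mh * max (∑ i ∈ S, B i - ∑ i ∈ S, X i) 0
    + ll * (∑ i ∈ S, Y i + ∑ i ∈ S, B i)

lemma bal_sum_eq {ι : Type*} [Fintype ι] [DecidableEq ι]
    (α : Finset ι → ℝ)
    (hbal : ∀ i : ι, ∑ S : Finset ι, α S * (if i ∈ S then (1 : ℝ) else 0) = 1)
    (g : ι → ℝ) :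
    ∑ S : Finset ι, α S * ∑ i ∈ S, g i = ∑ i, g i := by
  have key : ∀ S : Finset ι,
      α S * ∑ i ∈ S, g i = ∑ i : ι, (α S * (if i ∈ S then (1:ℝ) else 0)) * g i := by
    intro S
    rw [show (∑ i ∈ S, g i) = ∑ i : ι, (if i ∈ S then g i else 0) by
      rw [Finset.sum_ite_mem]; simp, Finset.mul_sum]
    refine Finset.sum_congr rfl fun i _ => ?_
    by_cases h : i ∈ S <;> simp [h]
  calc ∑ S : Finset ι, α S * ∑ i ∈ S, g i
      = ∑ S : Finset ι, ∑ i : ι, (α S * (if i ∈ S then (1:ℝ) else 0)) * g i := by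
        exact Finset.sum_congr rfl fun S _ => key S
    _ = ∑ i : ι, (∑ S : Finset ι, α S * (if i ∈ S then (1:ℝ) else 0)) * g i := by
        rw [Finset.sum_comm]
        exact Finset.sum_congr rfl fun i _ => (Finset.sum_mul ..).symm
    _ = ∑ i, g i := by
        refine Finset.sum_congr rfl fun i _ => ?_
        rw [hbal i, one_mul]

lemma fval_eq (lh mh : ℝ) (t : ℝ) :
    lh * max t 0 - mh * max (-t) 0 = ((lh + mh)/2) * t + ((lh - mh)/2) * |t| := by
  rcases le_total 0 t with h | h
  · rw [max_eq_left h, max_eq_right (by linarith), abs_of_nonneg h]; ring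
  · rw [max_eq_right h, max_eq_left (by linarith), abs_of_nonpos h]; ring

/-- the coalitional game is balanced. -/
theorem coalCost_balanced {ι : Type*} [Fintype ι] [DecidableEq ι]
    (lh mh ll : ℝ) (lb X Y B : ι → ℝ)
    (hlh : 0 ≤ lh) (hmh : 0 ≤ mh) (hll : 0 ≤ ll) (hprice : mh ≤ lh)
    (hlb : ∀ i, 0 ≤ lb i) (hX : ∀ i, 0 ≤ X i) (hY : ∀ i, 0 ≤ Y i) (hB : ∀ i, 0 ≤ B i)
    (α : Finset ι → ℝ) (hα0 : ∀ S, 0 ≤ α S) (hα1 : ∀ S, α S ≤ 1)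
    (hbal : ∀ i : ι, ∑ S : Finset ι, α S * (if i ∈ S then (1 : ℝ) else 0) = 1) :
    coalCost lh mh ll lb X Y B Finset.univ ≤
      ∑ S : Finset ι, α S * coalCost lh mh ll lb X Y B S := by
  set c1 : ℝ := (lh + mh)/2 with hc1
  set c2 : ℝ := (lh - mh)/2 with hc2
  have hc2n : 0 ≤ c2 := by rw [hc2]; linarith
  -- rewrite coalCost
  have hJ : ∀ S : Finset ι, coalCost lh mh ll lb X Y B S =
      (∑ i ∈ S, (lb i * B i + ll * (Y i + B i) + c1 * (X i - B i)))
        + c2 * |∑ i ∈ S, (X i - B i)| := by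
    intro S
    unfold coalCost
    have h1 : (∑ i ∈ S, B i) - ∑ i ∈ S, X i = -((∑ i ∈ S, X i) - ∑ i ∈ S, B i) := by ring
    rw [h1]
    have := fval_eq lh mh ((∑ i ∈ S, X i) - ∑ i ∈ S, B i)
    rw [Finset.sum_add_distrib, Finset.sum_add_distrib, ← Finset.mul_sum,
      Finset.sum_sub_distrib, ← Finset.mul_sum, Finset.sum_add_distrib, Finset.sum_sub_distrib]
    rw [← hc1, ← hc2] at this; linarith [this]
  have hd := bal_sum_eq α hbal (fun i => X i - B i)
  have hL := bal_sum_eq α hbal (fun i => lb i * B i + ll * (Y i + B i) + c1 * (X i - B i))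
  -- triangle inequality part
  have habs : c2 * |∑ i : ι, (X i - B i)| ≤
      ∑ S : Finset ι, α S * (c2 * |∑ i ∈ S, (X i - B i)|) := by
    have h1 : |∑ i : ι, (X i - B i)| = |∑ S : Finset ι, α S * ∑ i ∈ S, (X i - B i)| := by
      rw [hd]
    have h2 : |∑ S : Finset ι, α S * ∑ i ∈ S, (X i - B i)| ≤
        ∑ S : Finset ι, α S * |∑ i ∈ S, (X i - B i)| := by
      refine (Finset.abs_sum_le_sum_abs _ _).trans ?_
      refine Finset.sum_le_sum fun S _ => ?_
      rw [abs_mul, abs_of_nonneg (hα0 S)]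
    calc c2 * |∑ i : ι, (X i - B i)|
        ≤ c2 * ∑ S : Finset ι, α S * |∑ i ∈ S, (X i - B i)| := by
          apply mul_le_mul_of_nonneg_left _ hc2n
          rw [h1]; exact h2
      _ = ∑ S : Finset ι, α S * (c2 * |∑ i ∈ S, (X i - B i)|) := by
          rw [Finset.mul_sum]; exact Finset.sum_congr rfl fun S _ => by ring
  rw [hJ]
  calc (∑ i : ι, (lb i * B i + ll * (Y i + B i) + c1 * (X i - B i)))
        + c2 * |∑ i : ι, (X i - B i)|
      ≤ (∑ S : Finset ι, α S * ∑ i ∈ S, (lb i * B i + ll * (Y i + B i) + c1 * (X i - B i)))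
        + ∑ S : Finset ι, α S * (c2 * |∑ i ∈ S, (X i - B i)|) := by
        rw [hL]; linarith [habs]
    _ = ∑ S : Finset ι, α S * coalCost lh mh ll lb X Y B S := by
        rw [← Finset.sum_add_distrib]
        exact Finset.sum_congr rfl fun S _ => by rw [hJ S]; ring
end

section
/- The allocation ξ lies in the core of the game G(N,J): for every coalition S ⊆ N, Σ_{i∈S} ξ_i ≤ J(S). Specifically, if X_N ≥ B_N then Σ_{i∈S} ξ_i = J(S) − (λ_h − μ_h)(B_S − X_S)^+, and if X_N < B_N then Σ_{i∈S} ξ_i = J(S) − (λ_h − μ_h)(X_S − B_S)^+. -/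
/-- The proposed cost allocation ξ. -/
noncomputable def xiAlloc {ι : Type*} [Fintype ι]
    (lh mh ll : ℝ) (lb X Y B : ι → ℝ) (i : ι) : ℝ :=
  if ∑ j : ι, B j ≤ ∑ j : ι, X j then
    lb i * B i + lh * (X i - B i) + ll * (Y i + B i)
  else
    lb i * B i - mh * (B i - X i) + ll * (Y i + B i)

/-- the allocation ξ lies in the core. -/
theorem xi_in_core {ι : Type*} [Fintype ι] [DecidableEq ι]
    (lh mh ll : ℝ) (lb X Y B : ι → ℝ)
    (hlh : 0 ≤ lh) (hmh : 0 ≤ mh) (hll : 0 ≤ ll) (hprice : mh ≤ lh)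
    (hlb : ∀ i, 0 ≤ lb i) (hX : ∀ i, 0 ≤ X i) (hY : ∀ i, 0 ≤ Y i) (hB : ∀ i, 0 ≤ B i)
    (S : Finset ι) :
    (∑ i ∈ S, xiAlloc lh mh ll lb X Y B i ≤ coalCost lh mh ll lb X Y B S) ∧
    ((∑ j : ι, B j ≤ ∑ j : ι, X j →
        ∑ i ∈ S, xiAlloc lh mh ll lb X Y B i =
          coalCost lh mh ll lb X Y B S
            - (lh - mh) * max (∑ i ∈ S, B i - ∑ i ∈ S, X i) 0) ∧
     (∑ j : ι, X j < ∑ j : ι, B j →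
        ∑ i ∈ S, xiAlloc lh mh ll lb X Y B i =
          coalCost lh mh ll lb X Y B S
            - (lh - mh) * max (∑ i ∈ S, X i - ∑ i ∈ S, B i) 0)) := by

  classical
  set a := ∑ i ∈ S, X i with ha
  set b := ∑ i ∈ S, B i with hb
  have hmax : max (a - b) 0 - max (b - a) 0 = a - b := by
    rcases le_total a b with h | h
    · rw [max_eq_right (by linarith), max_eq_left (by linarith)]; ring
    · rw [max_eq_left (by linarith), max_eq_right (by linarith)]; ring
  have hsum1 : (∑ i ∈ S, (lb i * B i + lh * (X i - B i) + ll * (Y i + B i)))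
      = ∑ i ∈ S, lb i * B i + lh * (a - b) + ll * (∑ i ∈ S, Y i + b) := by
    rw [Finset.sum_add_distrib, Finset.sum_add_distrib, ← Finset.mul_sum,
      ← Finset.mul_sum, Finset.sum_sub_distrib, Finset.sum_add_distrib]
  have hsum2 : (∑ i ∈ S, (lb i * B i - mh * (B i - X i) + ll * (Y i + B i)))
      = ∑ i ∈ S, lb i * B i - mh * (b - a) + ll * (∑ i ∈ S, Y i + b) := by
    rw [Finset.sum_add_distrib, Finset.sum_sub_distrib, ← Finset.mul_sum,
      ← Finset.mul_sum, Finset.sum_sub_distrib, Finset.sum_add_distrib]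
  have key : (∑ j : ι, B j ≤ ∑ j : ι, X j →
        ∑ i ∈ S, xiAlloc lh mh ll lb X Y B i =
          coalCost lh mh ll lb X Y B S - (lh - mh) * max (b - a) 0) ∧
      (∑ j : ι, X j < ∑ j : ι, B j →
        ∑ i ∈ S, xiAlloc lh mh ll lb X Y B i =
          coalCost lh mh ll lb X Y B S - (lh - mh) * max (a - b) 0) := by
    constructor
    · intro hN
      have : ∑ i ∈ S, xiAlloc lh mh ll lb X Y B i
          = ∑ i ∈ S, (lb i * B i + lh * (X i - B i) + ll * (Y i + B i)) := by
        apply Finset.sum_congr rfl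
        intro i _
        simp [xiAlloc, hN]
      rw [this, hsum1, coalCost]
      nlinarith [hmax]
    · intro hN
      have : ∑ i ∈ S, xiAlloc lh mh ll lb X Y B i
          = ∑ i ∈ S, (lb i * B i - mh * (B i - X i) + ll * (Y i + B i)) := by
        apply Finset.sum_congr rfl
        intro i _
        simp [xiAlloc, not_le.mpr hN]
      rw [this, hsum2, coalCost]
      nlinarith [hmax]
  refine ⟨?_, key⟩
  rcases le_or_gt (∑ j : ι, B j) (∑ j : ι, X j) with hN | hN
  · rw [key.1 hN]
    nlinarith [le_max_right (b - a) (0:ℝ)]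
  · rw [key.2 hN]
    nlinarith [le_max_right (a - b) (0:ℝ)]
end

section
/- The total saving from forming the grand coalition equals (λ_h − μ_h)·min(Σ_{i∈N} E_i, Σ_{i∈N} D_i), where E_i = (B_i − X_i)^+ is each household's excess and D_i = (X_i − B_i)^+ its deficit: that is, Σ_{i∈N} J(i) − J(N) = (λ_h − μ_h)·min(Σ E_i, Σ D_i). -/
/-- total saving of the grand coalition equals
(λ_h − μ_h)·min(Σ E_i, Σ D_i). -/
theorem total_saving_formula {ι : Type*} [Fintype ι] [DecidableEq ι]
    (lh mh ll : ℝ) (lb X Y B : ι → ℝ)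
    (hlh : 0 ≤ lh) (hmh : 0 ≤ mh) (hll : 0 ≤ ll) (hprice : mh ≤ lh)
    (hlb : ∀ i, 0 ≤ lb i) (hX : ∀ i, 0 ≤ X i) (hY : ∀ i, 0 ≤ Y i) (hB : ∀ i, 0 ≤ B i) :
    ∑ i : ι, coalCost lh mh ll lb X Y B {i} - coalCost lh mh ll lb X Y B Finset.univ =
      (lh - mh) * min (∑ i : ι, max (B i - X i) 0) (∑ i : ι, max (X i - B i) 0) := by
  classical
  set d : ℝ := ∑ i : ι, max (X i - B i) 0 with hd
  set e : ℝ := ∑ i : ι, max (B i - X i) 0 with he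
  have hde : (∑ i : ι, X i) - (∑ i : ι, B i) = d - e := by
    rw [hd, he, ← Finset.sum_sub_distrib, ← Finset.sum_sub_distrib]
    refine Finset.sum_congr rfl fun i _ => ?_
    rcases le_total (X i) (B i) with h | h
    · rw [max_eq_right (by linarith), max_eq_left (by linarith)]; ring
    · rw [max_eq_left (by linarith), max_eq_right (by linarith)]; ring
  have key : ∑ i : ι, coalCost lh mh ll lb X Y B {i}
      = ∑ i : ι, lb i * B i + lh * d - mh * e + ll * (∑ i : ι, Y i + ∑ i : ι, B i) := by
    simp only [coalCost, Finset.sum_singleton]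
    rw [hd, he, Finset.sum_add_distrib, Finset.sum_sub_distrib, Finset.sum_add_distrib,
      ← Finset.mul_sum, ← Finset.mul_sum, ← Finset.mul_sum, Finset.sum_add_distrib]
  have hde' : (∑ i : ι, B i) - (∑ i : ι, X i) = e - d := by linarith
  rw [key, coalCost, hde, hde']
  rcases le_total d e with h | h
  · rw [max_eq_right (by linarith), max_eq_left (by linarith),
      min_eq_right (by linarith)]
    ring
  · rw [max_eq_left (by linarith), max_eq_right (by linarith),
      min_eq_left (by linarith)]
    ring
end
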